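/- Let R, Q > 0 and μ < −1, and let ψ be a C² solution of ψ''(r) = Q r^{2μ} ψ(r) for all r > 2R, with ψ'(2R) > 0 and ψ(2R) > 0, and let c > 0 be the constant with lim_{r→+∞} ψ(r)/r = c. Then there exists ε ∈ (0,1) such that A(r) := ψ(r) − c r satisfies A(r) = O(r^{1−ε}) as r → +∞ (i.e. there exist K, r₀ > 0 with |A(r)| ≤ K r^{1−ε} for all r ≥ r₀), lim_{r→+∞} A'(r) = 0, and consequently ∫_{2R}^∞ | 1/ψ(t) − 1/(ct) | dt < ∞. -/

import Mathlib

open Set Filter MeasureTheory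

/-- end of Section 8.2 of the paper. Let `R, Q > 0`, `μ < -1`, and
let `ψ` be a `C²` solution of `ψ''(r) = Q r^{2μ} ψ(r)` for `r > 2R` with `ψ(2R) > 0`,
`ψ'(2R) > 0`, and let `c > 0` satisfy `ψ(r)/r → c`. Then there is `ε ∈ (0,1)` with
`A(r) := ψ(r) - c r = O(r^{1-ε})` as `r → +∞`, `A'(r) → 0` (i.e. `ψ'(r) → c`), and
`∫_{2R}^∞ |1/ψ(t) - 1/(ct)| dt < ∞`. -/
theorem stmt_17
    (R Q μ : ℝ) (hR : 0 < R) (hQ : 0 < Q) (hμ : μ < -1)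
    (ψ : ℝ → ℝ)
    (hC2 : ContDiffOn ℝ 2 ψ (Set.Ici (2 * R)))
    (hψ2R : 0 < ψ (2 * R))
    (hψ'2R : 0 < derivWithin ψ (Set.Ici (2 * R)) (2 * R))
    (hode : ∀ r : ℝ, 2 * R < r → deriv (deriv ψ) r = Q * r ^ (2 * μ) * ψ r)
    (c : ℝ) (hc : 0 < c)
    (hlim : Filter.Tendsto (fun r => ψ r / r) Filter.atTop (nhds c)) :
    (∃ ε : ℝ, ε ∈ Set.Ioo (0 : ℝ) 1 ∧
      ∃ K r₀ : ℝ, 0 < K ∧ 0 < r₀ ∧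
        ∀ r : ℝ, r₀ ≤ r → |ψ r - c * r| ≤ K * r ^ (1 - ε)) ∧
    Filter.Tendsto (fun r => deriv ψ r) Filter.atTop (nhds c) ∧
    MeasureTheory.IntegrableOn (fun t => 1 / ψ t - 1 / (c * t))
      (Set.Ioi (2 * R)) := by
  have ha : (0:ℝ) < 2 * R := by linarith
  set a : ℝ := 2 * R with ha_def
  have hcont : ContinuousOn ψ (Ici a) := hC2.continuousOn
  set φ : ℝ → ℝ := derivWithin ψ (Ici a) with hφdef
  have hφcont : ContinuousOn φ (Ici a) :=
    hC2.continuousOn_derivWithin (uniqueDiffOn_Ici a) (by norm_num)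
  have hφC1 : ContDiffOn ℝ 1 φ (Ici a) :=
    hC2.derivWithin (uniqueDiffOn_Ici a) (by norm_num)
  have hφeq : ∀ r : ℝ, a < r → φ r = deriv ψ r := fun r hr =>
    derivWithin_of_mem_nhds (Ici_mem_nhds hr)
  have hψd : ∀ r : ℝ, a < r → HasDerivAt ψ (φ r) r := by
    intro r hr
    have h1 : DifferentiableAt ℝ ψ r :=
      ((hC2.differentiableOn (by norm_num)) r (le_of_lt hr)).differentiableAt
        (Ici_mem_nhds hr)
    rw [hφeq r hr]
    exact h1.hasDerivAt
  have hφd : ∀ r : ℝ, a < r → HasDerivAt φ (Q * r ^ (2*μ) * ψ r) r := by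
    intro r hr
    have h1 : DifferentiableAt ℝ φ r :=
      ((hφC1.differentiableOn (by norm_num)) r (le_of_lt hr)).differentiableAt
        (Ici_mem_nhds hr)
    have hev : φ =ᶠ[nhds r] deriv ψ := by
      filter_upwards [Ioi_mem_nhds hr] with x hx
      exact hφeq x hx
    have h2 : deriv φ r = Q * r ^ (2*μ) * ψ r := by
      rw [hev.deriv_eq, hode r hr]
    rw [← h2]; exact h1.hasDerivAt
  -- positivity of ψ on [a, ∞)
  have hψpos : ∀ r, a ≤ r → 0 < ψ r := by
    by_contra hcon
    push_neg at hcon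
    obtain ⟨rbad, hrbada, hrbad⟩ := hcon
    set S : Set ℝ := Ici a ∩ ψ ⁻¹' (Iic 0) with hS
    have hSne : S.Nonempty := ⟨rbad, hrbada, hrbad⟩
    have hSbd : BddBelow S := ⟨a, fun x hx => hx.1⟩
    have hSc : IsClosed S :=
      hcont.preimage_isClosed_of_isClosed isClosed_Ici isClosed_Iic
    set b := sInf S with hb
    have hbS : b ∈ S := hSc.csInf_mem hSne hSbd
    have hψb : ψ b ≤ 0 := hbS.2
    have hab : a < b := by
      rcases lt_or_eq_of_le (mem_Ici.mp hbS.1) with h | h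
      · exact h
      · exfalso; rw [← h] at hψb; linarith
    have hpos' : ∀ x, a ≤ x → x < b → 0 < ψ x := by
      intro x hx1 hx2
      by_contra hx0
      push_neg at hx0
      exact absurd (csInf_le hSbd ⟨hx1, hx0⟩) (not_le.mpr hx2)
    have hmono : MonotoneOn φ (Icc a b) := by
      apply monotoneOn_of_deriv_nonneg (convex_Icc a b)
        (hφcont.mono Icc_subset_Ici_self)
      · intro x hx; rw [interior_Icc] at hx
        exact (hφd x hx.1).differentiableAt.differentiableWithinAt
      · intro x hx; rw [interior_Icc] at hx
        rw [(hφd x hx.1).deriv]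
        have h1 : 0 < ψ x := hpos' x (le_of_lt hx.1) hx.2
        have h2 : 0 < x := lt_trans ha hx.1
        positivity
    have hφb : ∀ x ∈ Icc a b, 0 < φ x := by
      intro x hx
      have := hmono (left_mem_Icc.mpr (le_of_lt hab)) hx hx.1
      exact lt_of_lt_of_le hψ'2R this
    have hsm : StrictMonoOn ψ (Icc a b) := by
      apply strictMonoOn_of_deriv_pos (convex_Icc a b) (hcont.mono Icc_subset_Ici_self)
      intro x hx; rw [interior_Icc] at hx
      rw [← hφeq x hx.1]
      exact hφb x ⟨le_of_lt hx.1, le_of_lt hx.2⟩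
    have : ψ a < ψ b :=
      hsm (left_mem_Icc.mpr (le_of_lt hab)) (right_mem_Icc.mpr (le_of_lt hab)) hab
    linarith
  -- φ is monotone on [a, ∞)
  have hφmono : MonotoneOn φ (Ici a) := by
    apply monotoneOn_of_deriv_nonneg (convex_Ici a) hφcont
    · intro x hx; rw [interior_Ici] at hx
      exact (hφd x hx).differentiableAt.differentiableWithinAt
    · intro x hx; rw [interior_Ici] at hx
      rw [(hφd x hx).deriv]
      have h1 : 0 < ψ x := hψpos x (le_of_lt hx)
      have h2 : 0 < x := lt_trans ha hx
      positivity
  -- linear upper/lower bounds on ψ from bounds on φ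
  have hlinU : ∀ r M : ℝ, a ≤ r → (∀ x, r < x → φ x ≤ M) →
      ∀ s, r ≤ s → ψ s ≤ ψ r + M * (s - r) := by
    intro r M har hM s hs
    have hanti : AntitoneOn (fun x => ψ x - M * x) (Ici r) := by
      apply antitoneOn_of_deriv_nonpos (convex_Ici r)
      · exact (hcont.mono (Ici_subset_Ici.mpr har)).sub
          (continuousOn_const.mul continuousOn_id)
      · intro x hx; rw [interior_Ici] at hx
        exact ((hψd x (lt_of_le_of_lt har hx)).sub
          ((hasDerivAt_id x).const_mul M)).differentiableAt.differentiableWithinAt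
      · intro x hx; rw [interior_Ici] at hx
        have hd : HasDerivAt (fun x => ψ x - M * x) (φ x - M) x := by
          have h2 := (hψd x (lt_of_le_of_lt har hx)).sub ((hasDerivAt_id x).const_mul M); simp only [id, mul_one] at h2; exact h2
        rw [hd.deriv]
        linarith [hM x hx]
    have := hanti (self_mem_Ici) (mem_Ici.mpr hs) hs
    simp only at this
    linarith
  have hlinL : ∀ r M : ℝ, a ≤ r → (∀ x, r < x → M ≤ φ x) →
      ∀ s, r ≤ s → ψ r + M * (s - r) ≤ ψ s := by
    intro r M har hM s hs
    have hmono : MonotoneOn (fun x => ψ x - M * x) (Ici r) := by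
      apply monotoneOn_of_deriv_nonneg (convex_Ici r)
      · exact (hcont.mono (Ici_subset_Ici.mpr har)).sub
          (continuousOn_const.mul continuousOn_id)
      · intro x hx; rw [interior_Ici] at hx
        exact ((hψd x (lt_of_le_of_lt har hx)).sub
          ((hasDerivAt_id x).const_mul M)).differentiableAt.differentiableWithinAt
      · intro x hx; rw [interior_Ici] at hx
        have hd : HasDerivAt (fun x => ψ x - M * x) (φ x - M) x := by
          have h2 := (hψd x (lt_of_le_of_lt har hx)).sub ((hasDerivAt_id x).const_mul M); simp only [id, mul_one] at h2; exact h2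
        rw [hd.deriv]
        linarith [hM x hx]
    have := hmono (self_mem_Ici) (mem_Ici.mpr hs) hs
    simp only at this
    linarith
  -- consequences via the limit ψ(r)/r → c
  have hMU : ∀ r M : ℝ, a ≤ r → (∀ s, r ≤ s → ψ s ≤ ψ r + M * (s - r)) → c ≤ M := by
    intro r M har hub
    have h1 : Tendsto (fun s : ℝ => M + (ψ r - M * r) / s) atTop (nhds M) := by
      have h2 : Tendsto (fun s : ℝ => (ψ r - M * r) / s) atTop (nhds 0) :=
        tendsto_const_nhds.div_atTop tendsto_id
      simpa using (tendsto_const_nhds.add h2 :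
        Tendsto (fun s : ℝ => M + (ψ r - M * r) / s) atTop (nhds (M + 0)))
    apply le_of_tendsto_of_tendsto hlim h1
    filter_upwards [eventually_ge_atTop (max r 1)] with s hs
    have hs1 : (1:ℝ) ≤ s := le_trans (le_max_right _ _) hs
    have hsr : r ≤ s := le_trans (le_max_left _ _) hs
    have hs0 : (0:ℝ) < s := lt_of_lt_of_le zero_lt_one hs1
    have h3 := hub s hsr
    have h4 : ψ s / s ≤ (ψ r + M * (s - r)) / s :=
      div_le_div_of_nonneg_right h3 hs0.le
    calc ψ s / s ≤ (ψ r + M * (s - r)) / s := h4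
      _ = M + (ψ r - M * r) / s := by field_simp; ring
  have hML : ∀ r M : ℝ, a ≤ r → (∀ s, r ≤ s → ψ r + M * (s - r) ≤ ψ s) → M ≤ c := by
    intro r M har hlb
    have h1 : Tendsto (fun s : ℝ => M + (ψ r - M * r) / s) atTop (nhds M) := by
      have h2 : Tendsto (fun s : ℝ => (ψ r - M * r) / s) atTop (nhds 0) :=
        tendsto_const_nhds.div_atTop tendsto_id
      simpa using (tendsto_const_nhds.add h2 :
        Tendsto (fun s : ℝ => M + (ψ r - M * r) / s) atTop (nhds (M + 0)))
    apply le_of_tendsto_of_tendsto h1 hlim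
    filter_upwards [eventually_ge_atTop (max r 1)] with s hs
    have hs1 : (1:ℝ) ≤ s := le_trans (le_max_right _ _) hs
    have hsr : r ≤ s := le_trans (le_max_left _ _) hs
    have hs0 : (0:ℝ) < s := lt_of_lt_of_le zero_lt_one hs1
    have h3 := hlb s hsr
    have h4 : (ψ r + M * (s - r)) / s ≤ ψ s / s :=
      div_le_div_of_nonneg_right h3 hs0.le
    calc M + (ψ r - M * r) / s = (ψ r + M * (s - r)) / s := by field_simp; ring
      _ ≤ ψ s / s := h4
  -- φ ≤ c everywhere
  have hφlec : ∀ r, a ≤ r → φ r ≤ c := by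
    intro r har
    refine hML r (φ r) har (hlinL r (φ r) har ?_)
    intro x hx
    exact hφmono (mem_Ici.mpr har) (mem_Ici.mpr (le_trans har (le_of_lt hx))) (le_of_lt hx)
  -- pick r₁ with linear bounds on ψ
  obtain ⟨N, hN⟩ := eventually_atTop.mp
    ((hlim.eventually (eventually_gt_nhds (show c/2 < c by linarith))).and
     (hlim.eventually (eventually_lt_nhds (show c < 2*c by linarith))))
  set r₁ : ℝ := max N (max (a+1) 1) with hr₁def
  have har₁ : a < r₁ :=
    lt_of_lt_of_le (by linarith) (le_trans (le_max_left _ _) (le_max_right _ _))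
  have h1r₁ : 1 ≤ r₁ := le_trans (le_max_right _ _) (le_max_right _ _)
  have h0r₁ : 0 < r₁ := lt_of_lt_of_le zero_lt_one h1r₁
  have hbounds : ∀ t, r₁ ≤ t → c/2 * t ≤ ψ t ∧ ψ t ≤ 2*c*t := by
    intro t ht
    have h0t : 0 < t := lt_of_lt_of_le h0r₁ ht
    have h := hN t (le_trans (le_max_left _ _) ht)
    constructor
    · exact (le_div_iff₀ h0t).mp (le_of_lt h.1)
    · exact le_of_lt ((div_lt_iff₀ h0t).mp h.2)
  set δ : ℝ := -(2*μ+2) with hδdef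
  have hδ : 0 < δ := by simp only [hδdef]; linarith
  set K₁ : ℝ := 2*c*Q/δ with hK₁def
  have hK₁ : 0 < K₁ := by positivity
  -- the key comparison: φ s ≤ φ r + K₁ r^{-δ} for r₁ ≤ r ≤ s
  have hrpowd : ∀ x : ℝ, 0 < x → ∀ p : ℝ,
      HasDerivAt (fun t : ℝ => t ^ p) (p * x ^ (p-1)) x := by
    intro x hx p
    exact Real.hasDerivAt_rpow_const (Or.inl hx.ne')
  have hkey : ∀ r, r₁ ≤ r → ∀ s, r ≤ s → φ s ≤ φ r + K₁ * r ^ (-δ) := by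
    intro r hr s hs
    have h0r : 0 < r := lt_of_lt_of_le h0r₁ hr
    have hanti : AntitoneOn (fun x => φ x + K₁ * x ^ (-δ)) (Ici r) := by
      apply antitoneOn_of_deriv_nonpos (convex_Ici r)
      · apply ContinuousOn.add
        · exact hφcont.mono (Ici_subset_Ici.mpr (le_trans (le_of_lt har₁) hr))
        · apply continuousOn_const.mul
          intro x hx
          exact (Real.continuousAt_rpow_const x (-δ)
            (Or.inl (ne_of_gt (lt_of_lt_of_le h0r hx)))).continuousWithinAt
      · intro x hx; rw [interior_Ici] at hx
        have h0x : 0 < x := lt_of_lt_of_le h0r hx.le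
        have hax : a < x := lt_of_lt_of_le har₁ (le_trans hr hx.le)
        exact ((hφd x hax).add (((hrpowd x h0x (-δ)).const_mul K₁))).differentiableAt.differentiableWithinAt
      · intro x hx; rw [interior_Ici] at hx
        have h0x : 0 < x := lt_of_lt_of_le h0r hx.le
        have hax : a < x := lt_of_lt_of_le har₁ (le_trans hr hx.le)
        have hd : HasDerivAt (fun x => φ x + K₁ * x ^ (-δ))
            (Q * x ^ (2*μ) * ψ x + K₁ * (-δ * x ^ (-δ-1))) x :=
          (hφd x hax).add ((hrpowd x h0x (-δ)).const_mul K₁)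
        rw [hd.deriv]
        -- bound: Q x^{2μ} ψ x ≤ Q x^{2μ} (2c x) = 2cQ x^{2μ+1} = K₁ δ x^{-δ-1}
        have hψx : ψ x ≤ 2*c*x := (hbounds x (le_trans hr hx.le)).2
        have hp : (0:ℝ) < x ^ (2*μ) := Real.rpow_pos_of_pos h0x _
        have he : x ^ (-δ-1) = x ^ (2*μ) * x := by
          rw [show -δ-1 = 2*μ + 1 by simp only [hδdef]; ring,
            Real.rpow_add_one h0x.ne' (2*μ)]
        have hKδ : K₁ * δ = 2*c*Q := by
          rw [hK₁def]; field_simp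
        have h1 : Q * x ^ (2*μ) * ψ x ≤ Q * x ^ (2*μ) * (2*c*x) := by
          apply mul_le_mul_of_nonneg_left hψx
          positivity
        have h2 : K₁ * (-δ * x ^ (-δ-1)) = -(Q * x ^ (2*μ) * (2*c*x)) := by
          rw [he]
          linear_combination (-(x ^ (2*μ) * x)) * hKδ
        linarith
    have h1 := hanti (self_mem_Ici) (mem_Ici.mpr hs) hs
    simp only at h1
    have h0s : 0 < s := lt_of_lt_of_le h0r hs
    have h2 : 0 ≤ K₁ * s ^ (-δ) := by positivity
    linarith
  -- c is close to φ from above: c - K₁ r^{-δ} ≤ φ r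
  have hclose : ∀ r, r₁ ≤ r → c - K₁ * r ^ (-δ) ≤ φ r := by
    intro r hr
    have hub : ∀ s, r ≤ s → ψ s ≤ ψ r + (φ r + K₁ * r ^ (-δ)) * (s - r) := by
      refine hlinU r _ (le_trans (le_of_lt har₁) hr) ?_
      intro x hx
      exact hkey r hr x (le_of_lt hx)
    have := hMU r _ (le_trans (le_of_lt har₁) hr) hub
    linarith
  -- Part 2: deriv ψ → c
  have hφtendsto : Tendsto φ atTop (nhds c) := by
    have hlow : Tendsto (fun r : ℝ => c - K₁ * r ^ (-δ)) atTop (nhds c) := by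
      have := ((tendsto_rpow_neg_atTop hδ).const_mul K₁)
      have h2 : Tendsto (fun r : ℝ => c - K₁ * r ^ (-δ)) atTop (nhds (c - K₁ * 0)) :=
        tendsto_const_nhds.sub this
      simpa using h2
    apply tendsto_of_tendsto_of_tendsto_of_le_of_le' hlow tendsto_const_nhds
    · filter_upwards [eventually_ge_atTop r₁] with r hr
      exact hclose r hr
    · filter_upwards [eventually_ge_atTop a] with r hr
      exact hφlec r hr
  have part2 : Tendsto (fun r => deriv ψ r) atTop (nhds c) := by
    apply hφtendsto.congr'
    filter_upwards [eventually_gt_atTop a] with r hr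
    exact hφeq r hr
  -- Part 1 : the O bound
  set ε : ℝ := min δ 1 / 2 with hεdef
  have hε0 : 0 < ε := by positivity
  have hε1 : ε < 1 := by
    have : min δ 1 ≤ 1 := min_le_right _ _
    simp only [hεdef]; linarith
  have hεδ : ε ≤ δ := by
    have : min δ 1 ≤ δ := min_le_left _ _
    simp only [hεdef]; linarith
  set K₂ : ℝ := K₁ / (1 - ε) with hK₂def
  have hK₂ : 0 < K₂ := by
    apply div_pos hK₁; linarith
  have hAanti : AntitoneOn (fun r => ψ r - c * r) (Ici a) := by
    apply antitoneOn_of_deriv_nonpos (convex_Ici a)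
    · exact hcont.sub (continuousOn_const.mul continuousOn_id)
    · intro x hx; rw [interior_Ici] at hx
      exact ((hψd x hx).sub
        ((hasDerivAt_id x).const_mul c)).differentiableAt.differentiableWithinAt
    · intro x hx; rw [interior_Ici] at hx
      have hd : HasDerivAt (fun x => ψ x - c * x) (φ x - c) x := by
        have h2 := (hψd x hx).sub ((hasDerivAt_id x).const_mul c); simp only [id, mul_one] at h2; exact h2
      rw [hd.deriv]
      linarith [hφlec x hx.le]
  have humono : MonotoneOn (fun r => ψ r - c * r + K₂ * r ^ (1-ε)) (Ici r₁) := by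
    apply monotoneOn_of_deriv_nonneg (convex_Ici r₁)
    · apply ContinuousOn.add
      · exact (hcont.mono (Ici_subset_Ici.mpr har₁.le)).sub
          (continuousOn_const.mul continuousOn_id)
      · apply continuousOn_const.mul
        intro x hx
        exact (Real.continuousAt_rpow_const x (1-ε)
          (Or.inl (ne_of_gt (lt_of_lt_of_le h0r₁ hx)))).continuousWithinAt
    · intro x hx; rw [interior_Ici] at hx
      have h0x : 0 < x := lt_of_lt_of_le h0r₁ hx.le
      have hax : a < x := lt_of_lt_of_le har₁ hx.le
      exact (((hψd x hax).sub ((hasDerivAt_id x).const_mul c)).add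
        ((hrpowd x h0x (1-ε)).const_mul K₂)).differentiableAt.differentiableWithinAt
    · intro x hx; rw [interior_Ici] at hx
      have h0x : 0 < x := lt_of_lt_of_le h0r₁ hx.le
      have h1x : 1 ≤ x := le_trans h1r₁ hx.le
      have hax : a < x := lt_of_lt_of_le har₁ hx.le
      have hd : HasDerivAt (fun x => ψ x - c * x + K₂ * x ^ (1-ε))
          (φ x - c + K₂ * ((1-ε) * x ^ (1-ε-1))) x := by
        have := ((hψd x hax).sub ((hasDerivAt_id x).const_mul c)).add
          ((hrpowd x h0x (1-ε)).const_mul K₂)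
        simp only [id, mul_one] at this; exact this
      rw [hd.deriv]
      have hce : K₂ * ((1-ε) * x ^ (1-ε-1)) = K₁ * x ^ (-ε) := by
        have hne : (1:ℝ) - ε ≠ 0 := by linarith
        rw [show (1-ε-1 : ℝ) = -ε by ring, hK₂def]
        field_simp
      rw [hce]
      have h1 : c - K₁ * x ^ (-δ) ≤ φ x := hclose x hx.le
      have h2 : x ^ (-δ) ≤ x ^ (-ε) :=
        Real.rpow_le_rpow_of_exponent_le h1x (by linarith)
      have h3 : K₁ * x ^ (-δ) ≤ K₁ * x ^ (-ε) :=
        mul_le_mul_of_nonneg_left h2 hK₁.le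
      linarith
  set K : ℝ := |ψ r₁ - c * r₁| + K₂ + 1 with hKdef
  have hKpos : 0 < K := by positivity
  have part1 : ∀ r : ℝ, r₁ ≤ r → |ψ r - c * r| ≤ K * r ^ (1 - ε) := by
    intro r hr
    have h0r : 0 < r := lt_of_lt_of_le h0r₁ hr
    have h1r : 1 ≤ r := le_trans h1r₁ hr
    have hpow1 : 1 ≤ r ^ (1-ε) := by
      calc (1:ℝ) = r ^ (0:ℝ) := (Real.rpow_zero r).symm
        _ ≤ r ^ (1-ε) := Real.rpow_le_rpow_of_exponent_le h1r (by linarith)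
    have hupper : ψ r - c * r ≤ ψ r₁ - c * r₁ :=
      hAanti (mem_Ici.mpr har₁.le) (mem_Ici.mpr (le_trans har₁.le hr)) hr
    have hlower := humono (self_mem_Ici) (mem_Ici.mpr hr) hr
    simp only at hlower
    have hK₂r₁ : 0 ≤ K₂ * r₁ ^ (1-ε) := by positivity
    have habs : |ψ r₁ - c * r₁| ≤ |ψ r₁ - c * r₁| * r ^ (1-ε) :=
      le_mul_of_one_le_right (abs_nonneg _) hpow1
    have hKr : K * r ^ (1-ε)
        = |ψ r₁ - c * r₁| * r ^ (1-ε) + K₂ * r ^ (1-ε) + r ^ (1-ε) := by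
      rw [hKdef]; ring
    rw [abs_le]
    constructor
    · have h2 : -(|ψ r₁ - c * r₁|) ≤ ψ r₁ - c * r₁ := neg_abs_le _
      linarith
    · have h2 : ψ r₁ - c * r₁ ≤ |ψ r₁ - c * r₁| := le_abs_self _
      have h3 : (0:ℝ) ≤ K₂ * r ^ (1-ε) := by positivity
      linarith
  -- Part 3 : integrability
  have part3 : MeasureTheory.IntegrableOn (fun t => 1 / ψ t - 1 / (c * t)) (Set.Ioi a) := by
    have hfc : ContinuousOn (fun t => 1 / ψ t - 1 / (c * t)) (Ici a) := by
      apply ContinuousOn.sub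
      · exact continuousOn_const.div hcont (fun x hx => (hψpos x hx).ne')
      · refine continuousOn_const.div (continuousOn_const.mul continuousOn_id)
          (fun x hx => ?_)
        have : 0 < x := lt_of_lt_of_le ha hx
        positivity
    have hIoc : IntegrableOn (fun t => 1 / ψ t - 1 / (c * t)) (Ioc a r₁) :=
      ((hfc.mono Icc_subset_Ici_self).integrableOn_Icc).mono_set Ioc_subset_Icc_self
    have hIoi : IntegrableOn (fun t => 1 / ψ t - 1 / (c * t)) (Ioi r₁) := by
      have hg : IntegrableOn (fun t : ℝ => 2*K/c^2 * t ^ (-1-ε)) (Ioi r₁) := by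
        apply Integrable.const_mul
        exact integrableOn_Ioi_rpow_of_lt (by linarith) h0r₁
      apply Integrable.mono' hg
      · exact (hfc.mono (Ioi_subset_Ici har₁.le)).aestronglyMeasurable measurableSet_Ioi
      · rw [ae_restrict_iff' measurableSet_Ioi]
        refine ae_of_all _ (fun t ht => ?_)
        have h0t : 0 < t := lt_of_lt_of_le h0r₁ ht.le
        have hψt : 0 < ψ t := hψpos t (le_trans har₁.le ht.le)
        have hlb : c/2 * t ≤ ψ t := (hbounds t ht.le).1
        have hAb : |ψ t - c * t| ≤ K * t ^ (1-ε) := part1 t ht.le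
        have hct : (0:ℝ) < c * t := by positivity
        have heq : 1 / ψ t - 1 / (c * t) = (c * t - ψ t) / (ψ t * (c * t)) := by
          rw [div_sub_div _ _ hψt.ne' hct.ne']
          congr 1
          ring
        rw [Real.norm_eq_abs, heq, abs_div]
        have hden : |ψ t * (c * t)| = ψ t * (c * t) := abs_of_pos (by positivity)
        rw [hden]
        have hnum : |c * t - ψ t| ≤ K * t ^ (1-ε) := by rw [abs_sub_comm]; exact hAb
        have hden_lb : c/2 * t * (c * t) ≤ ψ t * (c * t) :=
          mul_le_mul_of_nonneg_right hlb (by positivity)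
        calc |c*t - ψ t| / (ψ t * (c * t))
            ≤ (K * t^(1-ε)) / (c/2 * t * (c*t)) :=
              div_le_div₀ (by positivity) hnum (by positivity) hden_lb
          _ = 2*K/c^2 * t^(-1-ε) := by
              have h2 : t ^ (-1-ε) * (t * t) = t ^ (1-ε) := by
                rw [show t * t = t ^ (2:ℝ) by
                    rw [show (2:ℝ) = ((2:ℕ):ℝ) by norm_num, Real.rpow_natCast]; ring,
                  ← Real.rpow_add h0t]
                congr 1
                ring
              rw [← h2]
              field_simp
    have hunion := hIoc.union hIoi
    rwa [Ioc_union_Ioi_eq_Ioi har₁.le] at hunion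
  exact ⟨⟨ε, ⟨hε0, hε1⟩, K, r₁, hKpos, h0r₁, part1⟩, part2, part3⟩
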